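/- In a vertex algebra V, the subspace C₂(V) spanned by all elements a_{(-2)}b (a, b ∈ V) is a two-sided ideal for the product a·b := a_{(-1)}b modulo C₂(V), and the quotient R_V = V/C₂(V) is a commutative associative algebra with unit given by the image of the vacuum vector. -/

import Mathlib

/-- A vertex algebra structure on a complex vector space `V`: modes `a_{(n)}` bilinear in
`a` and the argument, a vacuum vector, truncation, vacuum axioms, and the Borcherds
identity (whose two sides are finite sums, stabilizing for large cutoff `M`). -/
structure VertexAlgebra (V : Type) [AddCommGroup V] [Module ℂ V] where
  mode : V →ₗ[ℂ] ℤ → V →ₗ[ℂ] V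
  vac : V
  truncation : ∀ a b : V, ∃ N : ℤ, ∀ n ≥ N, mode a n b = 0
  vacuum_field : ∀ (n : ℤ) (b : V), mode vac n b = if n = -1 then b else 0
  creation_neg_one : ∀ a : V, mode a (-1) vac = a
  creation : ∀ (a : V) (n : ℤ), 0 ≤ n → mode a n vac = 0
  borcherds : ∀ (a b c : V) (p q t : ℤ), ∃ N : ℕ, ∀ M ≥ N,
    ∑ i ∈ Finset.range M,
        Ring.choose p i • mode (mode a (t + i) b) (p + q - i) c
      = ∑ i ∈ Finset.range M, ((-1 : ℤ) ^ i * Ring.choose t i) •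
          (mode a (p + t - i) (mode b (q + i) c)
            - (((-1 : ℤˣ) ^ t : ℤˣ) : ℤ) • mode b (q + t - i) (mode a (p + i) c))

/-!
Two specialisations of the Borcherds identity do all the work: the associativity formula
(`p = 0`) and the commutator formula (`t = 0`). The translation identity
`(a_{(-2)}𝟙)_{(n)} = -n a_{(n-1)}` shows by downward induction that every mode `a_{(n)}b`
with `n ≤ -2` lies in `C₂(V)`. Expanding the ideal defects, the commutator
`a_{(-1)}b - b_{(-1)}a` (via `c = 𝟙`) and the associator with these formulas leaves only such
modes, plus a multiple of a generator `u_{(-2)}w`.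
-/

namespace VertexAlgebra

variable {V : Type} [AddCommGroup V] [Module ℂ V] (VA : VertexAlgebra V)

lemma associativity_formula (a b c : V) (t q : ℤ) : ∃ N : ℕ, ∀ M ≥ N,
    VA.mode (VA.mode a t b) q c = ∑ i ∈ Finset.range M, ((-1 : ℤ) ^ i * Ring.choose t i) •
      (VA.mode a (t - i) (VA.mode b (q + i) c)
        - (((-1 : ℤˣ) ^ t : ℤˣ) : ℤ) • VA.mode b (q + t - i) (VA.mode a i c)) := by
  obtain ⟨N, hN⟩ := VA.borcherds a b c 0 q t
  refine ⟨N + 1, fun M hM => ?_⟩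
  have h := hN M (by omega)
  rw [Finset.sum_eq_single_of_mem 0 (by simp; omega)
    (fun i _ hi => by rw [Ring.choose_zero_pos ℤ (Nat.pos_of_ne_zero hi), zero_smul])] at h
  simpa using h

lemma commutator_formula (a b c : V) (p q : ℤ) : ∃ N : ℕ, ∀ M ≥ N,
    ∑ i ∈ Finset.range M, Ring.choose p i • VA.mode (VA.mode a i b) (p + q - i) c
      = VA.mode a p (VA.mode b q c) - VA.mode b q (VA.mode a p c) := by
  obtain ⟨N, hN⟩ := VA.borcherds a b c p q 0
  refine ⟨N + 1, fun M hM => ?_⟩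
  have h := hN M (by omega)
  rw [eq_comm, Finset.sum_eq_single_of_mem 0 (by simp; omega)
    (fun i _ hi => by rw [Ring.choose_zero_pos ℤ (Nat.pos_of_ne_zero hi), mul_zero,
      zero_smul])] at h
  simpa using h.symm

lemma mode_translation (a c : V) (p : ℤ) :
    VA.mode (VA.mode a (-2) VA.vac) (p - 1) c = (1 - p) • VA.mode a (p - 2) c := by
  obtain ⟨N, hN⟩ := VA.borcherds a VA.vac c p (-1) (-2)
  have h := hN (N + 2) (by omega)
  -- by the creation and vacuum axioms only `i ≤ 1` survives on the left and `i = 0` on the right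
  rw [← Finset.sum_subset (Finset.range_subset_range.2 (show 2 ≤ N + 2 by omega))
      (fun i _ hi => by
        rw [Finset.mem_range, not_lt] at hi
        simp [VA.creation a (-2 + i) (by omega)]),
    ← Finset.sum_subset (Finset.range_subset_range.2 (show 1 ≤ N + 2 by omega))
      (fun i _ hi => by
        rw [Finset.mem_range, not_lt] at hi
        simp [VA.vacuum_field, show i ≠ 0 by omega, show -3 - (i : ℤ) ≠ -1 by omega])] at h
  simp only [Finset.sum_range_succ, Finset.sum_range_zero, VA.vacuum_field] at h
  norm_num [VA.creation_neg_one] at h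
  rw [show p + -1 - 1 = p + -2 by ring, ← eq_sub_iff_add_eq] at h
  rw [sub_smul, one_smul]
  simpa only [sub_eq_add_neg] using h

def C₂ : Submodule ℂ V := Submodule.span ℂ {x | ∃ a b : V, x = VA.mode a (-2) b}

lemma mode_neg_two_mem_C₂ (a b : V) : VA.mode a (-2) b ∈ VA.C₂ :=
  Submodule.subset_span ⟨a, b, rfl⟩

lemma mode_mem_C₂ {n : ℤ} (hn : n ≤ -2) (a b : V) : VA.mode a n b ∈ VA.C₂ := by
  induction n, hn using Int.leInductionDown generalizing a b with
  | base => exact VA.mode_neg_two_mem_C₂ a b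
  | pred n hn ih =>
    have hT := VA.mode_translation a b (n + 1)
    rw [add_sub_cancel_right, show n + 1 - 2 = n - 1 by ring,
      show (1 : ℤ) - (n + 1) = -n by ring, ← Int.cast_smul_eq_zsmul ℂ] at hT
    have hne : ((-n : ℤ) : ℂ) ≠ 0 := by exact_mod_cast (show -n ≠ 0 by omega)
    rw [← Submodule.smul_mem_iff _ hne, ← hT]
    exact ih _ b

lemma mode_neg_one_mem_C₂_of_left_mem {a : V} (ha : a ∈ VA.C₂) (b : V) :
    VA.mode a (-1) b ∈ VA.C₂ := by
  suffices VA.C₂ ≤ VA.C₂.comap (LinearMap.applyₗ b ∘ₗ LinearMap.proj (-1) ∘ₗ VA.mode) from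
    this ha
  refine Submodule.span_le.2 ?_
  rintro _ ⟨u, w, rfl⟩
  obtain ⟨N, hN⟩ := VA.associativity_formula u w b (-2) (-1)
  change VA.mode (VA.mode u (-2) w) (-1) b ∈ VA.C₂
  rw [hN N le_rfl]
  refine Submodule.sum_mem _ fun i _ => Submodule.smul_of_tower_mem _ _ ?_
  exact sub_mem (VA.mode_mem_C₂ (by omega) _ _)
    (Submodule.smul_of_tower_mem _ _ (VA.mode_mem_C₂ (by omega) _ _))

lemma mode_neg_one_mem_C₂_of_right_mem (a : V) {b : V} (hb : b ∈ VA.C₂) :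
    VA.mode a (-1) b ∈ VA.C₂ := by
  suffices VA.C₂ ≤ VA.C₂.comap (VA.mode a (-1)) from this hb
  refine Submodule.span_le.2 ?_
  rintro _ ⟨u, w, rfl⟩
  obtain ⟨N, hN⟩ := VA.commutator_formula a u w (-1) (-2)
  change VA.mode a (-1) (VA.mode u (-2) w) ∈ VA.C₂
  rw [← sub_add_cancel (VA.mode a (-1) _) (VA.mode u (-2) _), ← hN N le_rfl]
  exact add_mem (Submodule.sum_mem _ fun i _ =>
    Submodule.smul_of_tower_mem _ _ (VA.mode_mem_C₂ (by omega) _ _)) (VA.mode_neg_two_mem_C₂ _ _)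

lemma mode_neg_one_sub_mode_neg_one_mem_C₂ (a b : V) :
    VA.mode a (-1) b - VA.mode b (-1) a ∈ VA.C₂ := by
  obtain ⟨N, hN⟩ := VA.commutator_formula a b VA.vac (-1) (-1)
  rw [VA.creation_neg_one, VA.creation_neg_one] at hN
  rw [← hN N le_rfl]
  exact Submodule.sum_mem _ fun i _ =>
    Submodule.smul_of_tower_mem _ _ (VA.mode_mem_C₂ (by omega) _ _)

lemma mode_neg_one_assoc_sub_mem_C₂ (a b c : V) :
    VA.mode (VA.mode a (-1) b) (-1) c - VA.mode a (-1) (VA.mode b (-1) c) ∈ VA.C₂ := by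
  obtain ⟨N, hN⟩ := VA.associativity_formula a b c (-1) (-1)
  rw [hN (N + 1) (by omega), Finset.sum_range_succ', add_sub_assoc]
  refine add_mem (Submodule.sum_mem _ fun i _ => Submodule.smul_of_tower_mem _ _ ?_) ?_
  · exact sub_mem (VA.mode_mem_C₂ (by omega) _ _)
      (Submodule.smul_of_tower_mem _ _ (VA.mode_mem_C₂ (by omega) _ _))
  · -- the `i = 0` term is `a_{(-1)}b_{(-1)}c + b_{(-2)}a_{(0)}c`
    norm_num
    exact VA.mode_neg_two_mem_C₂ _ _

end VertexAlgebra

/-- Zhu's commutative algebra: in a vertex algebra `V`, the span `C₂(V)` of all elements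
`a_{(-2)}b` is a two-sided ideal for the product `a·b = a_{(-1)}b`, and modulo `C₂(V)`
this product is commutative and associative with unit the image of the vacuum. -/
theorem stmt9 (V : Type) [AddCommGroup V] [Module ℂ V] (VA : VertexAlgebra V)
    (C2 : Submodule ℂ V)
    (hC2 : C2 = Submodule.span ℂ {x | ∃ a b : V, x = VA.mode a (-2) b}) :
    (∀ a b : V, a ∈ C2 → VA.mode a (-1) b ∈ C2) ∧
    (∀ a b : V, b ∈ C2 → VA.mode a (-1) b ∈ C2) ∧
    (∀ a b : V, VA.mode a (-1) b - VA.mode b (-1) a ∈ C2) ∧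
    (∀ a b c : V,
      VA.mode (VA.mode a (-1) b) (-1) c - VA.mode a (-1) (VA.mode b (-1) c) ∈ C2) ∧
    (∀ a : V, VA.mode VA.vac (-1) a = a) := by
  subst hC2
  exact ⟨fun a b ha => VA.mode_neg_one_mem_C₂_of_left_mem ha b,
    fun a b hb => VA.mode_neg_one_mem_C₂_of_right_mem a hb,
    VA.mode_neg_one_sub_mode_neg_one_mem_C₂,
    VA.mode_neg_one_assoc_sub_mem_C₂,
    fun a => by rw [VA.vacuum_field, if_pos rfl]⟩
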